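/- Fix n ≥ 1 and let φ_k = −π(n+1)/n + 2πk/n for k = 1, …, n (so φ_1 ≤ φ_2 ≤ … ≤ φ_n). Let θ_1, …, θ_n ∈ [−π, π). Then the minimum over all permutations σ of {1, …, n} and all τ ∈ (−π, π) of ∑_{i=1}^n (1/2)(θ_i − φ_{σ(i)} − τ)² is attained at τ* = (1/n) ∑_{i=1}^n θ_i together with σ equal to the inverse of a permutation sorting θ in ascending order; that is, the minimizing configuration is θ̂*_i = τ* + φ_{σ_sort^{−1}(i)}, where σ_sort satisfies θ_{σ_sort(1)} ≤ θ_{σ_sort(2)} ≤ … ≤ θ_{σ_sort(n)}. -/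

import Mathlib

/-!
Since `∑ₖ φₖ = 0`, the mean of `θ - φ ∘ σ` is `(∑ᵢ θᵢ)/n` for every `σ`, and a mean minimizes the
sum of squared deviations, so `τs` is optimal whatever `σ` is. At `τ = τs`, expanding the square
leaves `-2 ∑ᵢ (θᵢ - τs) φ_{σ(i)}` as the only term depending on `σ`, and by the rearrangement
inequality it is smallest when `φ ∘ σ` is sorted like `θ`, that is, for `σ = σs⁻¹`.
-/

open Finset

theorem Monovary.sum_sub_sq_le_sum_sub_comp_perm_sq {ι α : Type*} [Fintype ι] [CommRing α]
    [LinearOrder α] [IsStrictOrderedRing α] {f g : ι → α} (hfg : Monovary f g)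
    (σ : Equiv.Perm ι) : ∑ i, (f i - g i) ^ 2 ≤ ∑ i, (f i - g (σ i)) ^ 2 := by
  have hsq : ∑ i, g (σ i) ^ 2 = ∑ i, g i ^ 2 := Equiv.sum_comp σ (fun i => g i ^ 2)
  have hmul : ∑ i, f i * g (σ i) ≤ ∑ i, f i * g i := hfg.sum_mul_comp_perm_le_sum_mul
  simp only [sub_sq, sum_add_distrib, sum_sub_distrib, mul_assoc, ← mul_sum, hsq]
  linarith

theorem sum_sub_mean_sq_le_sum_sub_sq {ι : Type*} [Fintype ι] (x : ι → ℝ) (t : ℝ) :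
    ∑ i, (x i - (∑ j, x j) / Fintype.card ι) ^ 2 ≤ ∑ i, (x i - t) ^ 2 := by
  set m := (∑ j, x j) / Fintype.card ι
  have hdev : ∑ i, (x i - m) = 0 := by
    rcases isEmpty_or_nonempty ι with hι | hι
    · simp
    · rw [sum_sub_distrib, sum_const, card_univ, nsmul_eq_mul, mul_div_cancel₀ _
        (Nat.cast_ne_zero.mpr Fintype.card_ne_zero), sub_self]
  have hsplit : ∑ i, (x i - t) ^ 2 =
      ∑ i, (x i - m) ^ 2 + 2 * (m - t) * ∑ i, (x i - m) + Fintype.card ι * (m - t) ^ 2 := by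
    rw [mul_sum, ← card_univ, ← nsmul_eq_mul, ← sum_const, ← sum_add_distrib, ← sum_add_distrib]
    exact sum_congr rfl fun i _ => by ring
  rw [hsplit, hdev, mul_zero, add_zero]
  exact le_add_of_nonneg_right (by positivity)

theorem Fin.sum_two_mul_add_one_sub_eq_zero (n : ℕ) :
    ∑ k : Fin n, (2 * (k : ℝ) + 1 - n) = 0 := by
  have hodd : ∑ k ∈ range n, (2 * (k : ℝ) + 1) = n ^ 2 := by
    induction n with
    | zero => simp
    | succ n ih => rw [sum_range_succ, ih]; push_cast; ring
  rw [Fin.sum_univ_eq_sum_range (fun k => 2 * (k : ℝ) + 1 - n), sum_sub_distrib, hodd]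
  simp [sq]

theorem stmt_6_general {n : ℕ}
    (θ : Fin n → ℝ)
    (σs : Equiv.Perm (Fin n)) (hsort : Monotone fun i => θ (σs i))
    (φ : Fin n → ℝ)
    (hφ : ∀ k, φ k = -Real.pi * ((n : ℝ) + 1) / n + 2 * Real.pi * ((k : ℕ) + 1) / n)
    (τs : ℝ) (hτs : τs = (∑ i, θ i) / n) :
    ∀ (σ : Equiv.Perm (Fin n)) (τ : ℝ), -Real.pi < τ → τ < Real.pi →
      ∑ i, (1 / 2 : ℝ) * (θ i - φ (σs⁻¹ i) - τs) ^ 2 ≤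
        ∑ i, (1 / 2 : ℝ) * (θ i - φ (σ i) - τ) ^ 2 := by
  intro σ τ _ _
  have hφ' : φ = fun k : Fin n => Real.pi / n * (2 * (k : ℝ) + 1 - n) := by
    funext k; rw [hφ]; ring
  have hφ_mono : Monotone φ := by
    rw [hφ']
    intro a b hab
    dsimp only
    gcongr
    exact_mod_cast hab
  have hφ_sum : ∑ k, φ k = 0 := by
    rw [hφ', ← mul_sum, Fin.sum_two_mul_add_one_sub_eq_zero, mul_zero]
  have hmean : (∑ i, (θ i - φ (σ i))) / Fintype.card (Fin n) = τs := by
    rw [sum_sub_distrib, Equiv.sum_comp σ φ, hφ_sum, sub_zero, Fintype.card_fin, hτs]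
  have hmonovary : Monovary (fun i => θ i - τs) (φ ∘ ⇑σs⁻¹) := fun i j hij => by
    simpa using (hsort.monovary hφ_mono).comp_right (⇑σs⁻¹) hij
  have hsorted := hmonovary.sum_sub_sq_le_sum_sub_comp_perm_sq (σs * σ)
  have hcentered := sum_sub_mean_sq_le_sum_sub_sq (fun i => θ i - φ (σ i)) τ
  rw [hmean] at hcentered
  simp only [Function.comp_apply, Equiv.Perm.mul_apply, Equiv.Perm.coe_inv,
    Equiv.symm_apply_apply] at hsorted
  simp only [← mul_sum]
  gcongr _ * ?_
  calc ∑ i, (θ i - φ (σs⁻¹ i) - τs) ^ 2 = ∑ i, (θ i - τs - φ (σs⁻¹ i)) ^ 2 := by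
        simp only [sub_right_comm]
    _ ≤ ∑ i, (θ i - τs - φ (σ i)) ^ 2 := hsorted
    _ = ∑ i, (θ i - φ (σ i) - τs) ^ 2 := by simp only [sub_right_comm]
    _ ≤ _ := hcentered

/-- projecting a configuration of angles θ₁,…,θₙ ∈ [−π,π) onto the set of
optimally dispersed circular configurations { τ + Φ_σ }. The minimum of
Σ_i (1/2)(θ_i − φ_{σ(i)} − τ)² over permutations σ and τ ∈ (−π, π) is attained at
τ* = (Σ_i θ_i)/n and σ the inverse of a sorting permutation of θ. -/
theorem stmt_6 {n : ℕ} (hn : 1 ≤ n)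
    (θ : Fin n → ℝ) (hθ : ∀ i, θ i ∈ Set.Ico (-Real.pi) Real.pi)
    (σs : Equiv.Perm (Fin n)) (hsort : Monotone fun i => θ (σs i))
    (φ : Fin n → ℝ)
    (hφ : ∀ k, φ k = -Real.pi * ((n : ℝ) + 1) / n + 2 * Real.pi * ((k : ℕ) + 1) / n)
    (τs : ℝ) (hτs : τs = (∑ i, θ i) / n) :
    ∀ (σ : Equiv.Perm (Fin n)) (τ : ℝ), -Real.pi < τ → τ < Real.pi →
      ∑ i, (1 / 2 : ℝ) * (θ i - φ (σs⁻¹ i) - τs) ^ 2 ≤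
        ∑ i, (1 / 2 : ℝ) * (θ i - φ (σ i) - τ) ^ 2 :=
  stmt_6_general θ σs hsort φ hφ τs hτs
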